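/- Let n = 2^ℓ, m = 2^d, λ = m/n = 2^{d-ℓ}, and let a be an integer with d ≥ a ≥ max{1, d - ℓ}. Then there exist N and a set S ⊆ F_2^N of m distinct nonzero vectors such that, for a uniformly random linear map h : F_2^N → F_2^ℓ, Pr[|{x ∈ S : h(x) = 0}| > 2^a - 2] ≥ γ^2 λ^a 2^{-a^2}, where γ = ∏_{j=1}^∞ (1 - 2^{-j}). -/

import Mathlib

/-- The space of F_2-linear maps from F_2^N to F_2^ℓ. -/
abbrev Lin (N ℓ : ℕ) := (Fin N → ZMod 2) →ₗ[ZMod 2] (Fin ℓ → ZMod 2)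

/-- γ = ∏_{j=1}^∞ (1 - 2^{-j}). -/
noncomputable def gammaProd : ℝ := ∏' j : ℕ, (1 - (2 : ℝ)⁻¹ ^ (j + 1))

/-!
Write `d = k + a`, so `k ≤ ℓ`. The set `S` is `F_2^{k+a}` placed inside the nonzero vectors of
`F_2^{k+a+1}` by sending `x` to `(x, 0)`, except that `0` goes to the last unit vector.
If the first `k` columns `w` of `h` are linearly independent, the next `a` columns are the
combinations `∑ i, c j i • w i`, and the last column `z` is arbitrary, then `h` vanishes on the
`a`-dimensional space of vectors `(-tc, t, 0)`, so on at least `2^a - 1` points of `S`.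
The data `(w, c, z)` determine `h`, and the number of linearly independent `k`-tuples in `F_2^ℓ` is
`∏_{i<k} (2^ℓ - 2^i) ≥ γ 2^{ℓk}`. Hence the event has probability at least
`γ 2^{ℓk + ak + ℓ} / 2^{ℓ(k+a+1)} = γ λ^a 2^{-a²} ≥ γ² λ^a 2^{-a²}`.
-/

open Finset

theorem Real.hasProd_iInf_prod {ι : Type*} {f : ι → ℝ} (h0 : ∀ i, 0 ≤ f i)
    (h1 : ∀ i, f i ≤ 1) : HasProd f (⨅ s : Finset ι, ∏ i ∈ s, f i) :=
  tendsto_atTop_ciInf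
    (fun _ _ hst => prod_le_prod_of_subset_of_le_one hst (fun i _ => h0 i) fun i _ _ => h1 i)
    ⟨0, Set.forall_mem_range.2 fun _ => prod_nonneg fun i _ => h0 i⟩

section GammaProd

lemma one_sub_inv_two_pow_succ_nonneg (j : ℕ) : 0 ≤ 1 - (2 : ℝ)⁻¹ ^ (j + 1) :=
  sub_nonneg.2 (pow_le_one₀ (by norm_num) (by norm_num))

lemma gammaProd_eq_iInf : gammaProd = ⨅ s : Finset ℕ, ∏ j ∈ s, (1 - (2 : ℝ)⁻¹ ^ (j + 1)) :=
  (Real.hasProd_iInf_prod one_sub_inv_two_pow_succ_nonneg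
    fun j => sub_le_self _ (by positivity)).tprod_eq

lemma gammaProd_le_prod (s : Finset ℕ) : gammaProd ≤ ∏ j ∈ s, (1 - (2 : ℝ)⁻¹ ^ (j + 1)) :=
  gammaProd_eq_iInf ▸ ciInf_le
    ⟨0, Set.forall_mem_range.2 fun _ => prod_nonneg fun j _ => one_sub_inv_two_pow_succ_nonneg j⟩ s

lemma gammaProd_nonneg : 0 ≤ gammaProd :=
  gammaProd_eq_iInf ▸ le_ciInf fun _ => prod_nonneg fun j _ => one_sub_inv_two_pow_succ_nonneg j

lemma gammaProd_le_one : gammaProd ≤ 1 := by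
  simpa using gammaProd_le_prod ∅

lemma gammaProd_mul_le_prod_two_pow_sub_two_pow {k ℓ : ℕ} (hk : k ≤ ℓ) :
    gammaProd * 2 ^ (ℓ * k) ≤ ∏ i : Fin k, ((2 : ℝ) ^ ℓ - 2 ^ (i : ℕ)) := by
  -- the factor `i` is `2^ℓ` times the factor `j = ℓ - 1 - i` of `γ`, and these `j` are distinct
  have hfactor (i : Fin k) : (1 - (2 : ℝ)⁻¹ ^ (ℓ - 1 - i + 1)) * 2 ^ ℓ = 2 ^ ℓ - 2 ^ (i : ℕ) := by
    have : (2 : ℝ) ^ ℓ = 2 ^ (ℓ - 1 - i + 1) * 2 ^ (i : ℕ) := by rw [← pow_add]; congr 1; omega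
    rw [sub_mul, one_mul, this, inv_pow, inv_mul_cancel_left₀ (by positivity)]
  calc gammaProd * 2 ^ (ℓ * k)
      ≤ (∏ i : Fin k, (1 - (2 : ℝ)⁻¹ ^ (ℓ - 1 - i + 1))) * ∏ _i : Fin k, (2 : ℝ) ^ ℓ := by
        rw [prod_const, card_univ, Fintype.card_fin, ← pow_mul]
        gcongr
        exact (gammaProd_le_prod _).trans_eq (prod_image fun i _ j _ h => by omega)
    _ = ∏ i : Fin k, ((2 : ℝ) ^ ℓ - 2 ^ (i : ℕ)) := by
        rw [← prod_mul_distrib]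
        exact prod_congr rfl fun i _ => hfactor i

lemma gammaProd_mul_le_card_linearIndependent {k ℓ : ℕ} (hk : k ≤ ℓ) :
    gammaProd * 2 ^ (ℓ * k) ≤
      Nat.card {w : Fin k → Fin ℓ → ZMod 2 // LinearIndependent (ZMod 2) w} := by
  rw [card_linearIndependent (by simpa using hk), Nat.cast_prod]
  refine (gammaProd_mul_le_prod_two_pow_sub_two_pow hk).trans_eq (prod_congr rfl fun i _ => ?_)
  simp [ZMod.card, Nat.cast_sub (pow_le_pow_right₀ one_le_two (i.2.le.trans hk))]

end GammaProd

section Construction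

variable {K V : Type*} [CommRing K] [AddCommGroup V] [Module K V] {k a : ℕ}

def blockColumns (w : Fin k → V) (c : Fin a → Fin k → K) (z : V) : Fin (k + a + 1) → V :=
  Fin.snoc (Fin.append w fun j => ∑ i, c j i • w i) z

noncomputable def blockMap (w : Fin k → V) (c : Fin a → Fin k → K) (z : V) :
    (Fin (k + a + 1) → K) →ₗ[K] V :=
  Fintype.linearCombination K (blockColumns w c z)

def kernelVector (c : Fin a → Fin k → K) (t : Fin a → K) : Fin (k + a) → K :=
  Fin.append (fun i => -∑ j, t j * c j i) t

lemma kernelVector_natAdd (c : Fin a → Fin k → K) (t : Fin a → K) (j : Fin a) :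
    kernelVector c t (Fin.natAdd k j) = t j := by
  simp [kernelVector]

lemma kernelVector_zero (c : Fin a → Fin k → K) : kernelVector c 0 = 0 := by
  ext i
  cases i using Fin.addCases <;> simp [kernelVector]

lemma kernelVector_injective (c : Fin a → Fin k → K) : Function.Injective (kernelVector c) :=
  fun t t' h => funext fun j => by
    simpa [kernelVector_natAdd] using congrFun h (Fin.natAdd k j)

lemma blockMap_snoc_kernelVector (w : Fin k → V) (c : Fin a → Fin k → K) (z : V)
    (t : Fin a → K) : blockMap w c z (Fin.snoc (kernelVector c t) 0) = 0 := by
  simp only [blockMap, Fintype.linearCombination_apply, Fin.sum_univ_castSucc, Fin.snoc_castSucc,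
    Fin.snoc_last, zero_smul, add_zero, blockColumns, Fin.sum_univ_add, kernelVector,
    Fin.append_left, Fin.append_right, neg_smul, sum_smul, smul_sum, smul_smul, sum_neg_distrib]
  rw [sum_comm]
  exact neg_add_cancel _

lemma blockMap_injective : Function.Injective
    fun p : {w : Fin k → V // LinearIndependent K w} × (Fin a → Fin k → K) × V =>
      blockMap p.1.1 p.2.1 p.2.2 := by
  rintro ⟨⟨w, hw⟩, c, z⟩ ⟨⟨w', hw'⟩, c', z'⟩ h
  classical
  have hcol : blockColumns w c z = blockColumns w' c' z' := funext fun i => by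
    simpa [blockMap] using LinearMap.congr_fun h (Pi.single i 1)
  obtain ⟨happ, rfl⟩ := Fin.snoc_inj.1 hcol
  obtain rfl : w = w' := funext fun i => by simpa using congrFun happ (Fin.castAdd a i)
  obtain rfl : c = c' := funext fun j => hw.fintypeLinearCombination_injective <| by
    simpa [Fintype.linearCombination_apply] using congrFun happ (Fin.natAdd k j)
  rfl

end Construction

section AvoidZero

variable (R : Type*) [Zero R] [One R] [DecidableEq R] {n : ℕ}

def liftAvoidZero (x : Fin n → R) : Fin (n + 1) → R :=
  Fin.snoc x (if x = 0 then 1 else 0)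

variable {R}

lemma liftAvoidZero_injective : Function.Injective (liftAvoidZero R (n := n)) :=
  fun _ _ h => (Fin.snoc_inj.1 h).1

lemma liftAvoidZero_ne_zero [NeZero (1 : R)] (x : Fin n → R) : liftAvoidZero R x ≠ 0 := by
  intro h
  have hx : x = 0 := funext fun i => by simpa [liftAvoidZero] using congrFun h i.castSucc
  simpa [liftAvoidZero, hx] using congrFun h (Fin.last n)

lemma liftAvoidZero_of_ne_zero {x : Fin n → R} (hx : x ≠ 0) :
    liftAvoidZero R x = Fin.snoc x 0 := by
  simp [liftAvoidZero, hx]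

variable (R) [Fintype R]

def avoidZeroCube (n : ℕ) : Finset (Fin (n + 1) → R) :=
  univ.map ⟨liftAvoidZero R, liftAvoidZero_injective⟩

lemma card_avoidZeroCube : #(avoidZeroCube R n) = Fintype.card R ^ n := by
  simp [avoidZeroCube]

lemma zero_notMem_avoidZeroCube [NeZero (1 : R)] :
    (0 : Fin (n + 1) → R) ∉ avoidZeroCube R n := by
  simpa [avoidZeroCube] using fun x => liftAvoidZero_ne_zero x

end AvoidZero

lemma card_pow_sub_one_le_card_filter_blockMap {K V : Type*} [CommRing K] [Nontrivial K]
    [Fintype K] [DecidableEq K] [AddCommGroup V] [Module K V] [DecidableEq V] {k a : ℕ}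
    (w : Fin k → V) (c : Fin a → Fin k → K) (z : V) :
    Fintype.card K ^ a - 1 ≤
      #((avoidZeroCube K (k + a)).filter fun x => blockMap w c z x = 0) := by
  have hkernel : ∀ t ∈ univ.erase (0 : Fin a → K),
      liftAvoidZero K (kernelVector c t) ∈ (avoidZeroCube K (k + a)).filter
        fun x => blockMap w c z x = 0 := by
    intro t ht
    have hne : kernelVector c t ≠ 0 :=
      (kernelVector_injective c).ne_iff' (kernelVector_zero c) |>.2 (ne_of_mem_erase ht)
    refine mem_filter.2 ⟨mem_map_of_mem _ (mem_univ _), ?_⟩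
    rw [liftAvoidZero_of_ne_zero hne]
    exact blockMap_snoc_kernelVector w c z t
  calc Fintype.card K ^ a - 1 = #(univ.erase (0 : Fin a → K)) := by simp
    _ ≤ _ := card_le_card_of_injOn _ hkernel
        ((liftAvoidZero_injective.comp (kernelVector_injective c)).injOn)

section Probability

variable {ℓ k a : ℕ}

lemma two_pow_sub_two_lt_card_filter_blockMap (ha : 1 ≤ a) (w : Fin k → Fin ℓ → ZMod 2)
    (c : Fin a → Fin k → ZMod 2) (z : Fin ℓ → ZMod 2) :
    2 ^ a - 2 < #((avoidZeroCube (ZMod 2) (k + a)).filter fun x => blockMap w c z x = 0) := by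
  have hkernel := card_pow_sub_one_le_card_filter_blockMap w c z
  have htwo : 2 ≤ 2 ^ a := Nat.le_self_pow (by omega) 2
  rw [ZMod.card] at hkernel
  omega

lemma card_lin (N ℓ : ℕ) : Nat.card (Lin N ℓ) = 2 ^ (ℓ * N) := by
  rw [Nat.card_congr (LinearMap.toMatrix' (R := ZMod 2) (m := Fin ℓ) (n := Fin N)).toEquiv,
    Nat.card_congr (Matrix.of (m := Fin ℓ) (n := Fin N) (α := ZMod 2)).symm,
    Nat.card_eq_fintype_card]
  simp [ZMod.card, ← pow_mul, mul_comm]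

lemma gammaProd_mul_le_card_filter_ker (ha : 1 ≤ a) (hk : k ≤ ℓ) :
    gammaProd * 2 ^ (ℓ * k + a * k + ℓ) ≤
      Nat.card {h : Lin (k + a + 1) ℓ //
        2 ^ a - 2 < #((avoidZeroCube (ZMod 2) (k + a)).filter fun x => h x = 0)} := by
  have : Finite (Lin (k + a + 1) ℓ) := Finite.of_injective _ DFunLike.coe_injective
  calc gammaProd * 2 ^ (ℓ * k + a * k + ℓ)
      = gammaProd * 2 ^ (ℓ * k) * (2 ^ (a * k) * 2 ^ ℓ) := by ring
    _ ≤ Nat.card {w : Fin k → Fin ℓ → ZMod 2 // LinearIndependent (ZMod 2) w} *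
          (2 ^ (a * k) * 2 ^ ℓ) := by
        gcongr
        exact gammaProd_mul_le_card_linearIndependent hk
    _ = Nat.card ({w : Fin k → Fin ℓ → ZMod 2 // LinearIndependent (ZMod 2) w} ×
          (Fin a → Fin k → ZMod 2) × (Fin ℓ → ZMod 2)) := by
        simp [Nat.card_prod, ZMod.card, ← pow_mul, mul_comm]
    _ ≤ _ := Nat.cast_le.2 <| Nat.card_le_card_of_injective
        (fun p => ⟨blockMap p.1.1 p.2.1 p.2.2, two_pow_sub_two_lt_card_filter_blockMap ha _ _ _⟩)
        fun _ _ h => blockMap_injective (congrArg Subtype.val h)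

lemma gammaProd_sq_mul_le_prob_filter_ker (ha : 1 ≤ a) (hk : k ≤ ℓ) :
    gammaProd ^ 2 * ((2 : ℝ) ^ (k + a) / 2 ^ ℓ) ^ a * ((2 : ℝ) ^ (a ^ 2))⁻¹ ≤
      (Nat.card {h : Lin (k + a + 1) ℓ //
          2 ^ a - 2 < #((avoidZeroCube (ZMod 2) (k + a)).filter fun x => h x = 0)} : ℝ) /
        Nat.card (Lin (k + a + 1) ℓ) := by
  rw [card_lin, Nat.cast_pow, Nat.cast_ofNat, le_div_iff₀ (by positivity)]
  calc gammaProd ^ 2 * ((2 : ℝ) ^ (k + a) / 2 ^ ℓ) ^ a * ((2 : ℝ) ^ (a ^ 2))⁻¹ *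
        2 ^ (ℓ * (k + a + 1))
      = gammaProd ^ 2 * 2 ^ (ℓ * k + a * k + ℓ) := by
        rw [div_pow, ← pow_mul, ← pow_mul]
        field_simp
        ring
    _ ≤ gammaProd * 2 ^ (ℓ * k + a * k + ℓ) := by
        gcongr
        nlinarith [gammaProd_nonneg, gammaProd_le_one]
    _ ≤ _ := gammaProd_mul_le_card_filter_ker ha hk

end Probability

/-- Let n = 2^ℓ, m = 2^d, λ = m/n = 2^{d-ℓ}, and let a be an integer with
d ≥ a ≥ max{1, d - ℓ}. Then there exist N and a set S ⊆ F_2^N of m distinct nonzero vectors such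
that, for a uniformly random linear map h : F_2^N → F_2^ℓ,
Pr[|{x ∈ S : h(x) = 0}| > 2^a - 2] ≥ γ^2 λ^a 2^{-a^2}, where γ = ∏_{j=1}^∞ (1 - 2^{-j}). -/
theorem stmt_15 (ℓ d n m : ℕ) (hn : n = 2 ^ ℓ) (hm : m = 2 ^ d)
    (lam : ℝ) (hlam : lam = (m : ℝ) / n)
    (a : ℕ) (ha1 : 1 ≤ a) (had : a ≤ d) (hadl : d - ℓ ≤ a) :
    ∃ (N : ℕ) (S : Finset (Fin N → ZMod 2)),
      S.card = m ∧ (0 : Fin N → ZMod 2) ∉ S ∧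
      gammaProd ^ 2 * lam ^ a * ((2 : ℝ) ^ (a ^ 2))⁻¹ ≤
        (Nat.card {h : Lin N ℓ // 2 ^ a - 2 < (S.filter (fun x => h x = 0)).card} : ℝ) /
          (Nat.card (Lin N ℓ) : ℝ) := by
  obtain ⟨k, rfl⟩ : ∃ k, d = k + a := ⟨d - a, by omega⟩
  refine ⟨k + a + 1, avoidZeroCube (ZMod 2) (k + a), ?_, zero_notMem_avoidZeroCube _, ?_⟩
  · rw [card_avoidZeroCube, ZMod.card, hm]
  · rw [hlam, hm, hn]
    push_cast
    exact gammaProd_sq_mul_le_prob_filter_ker ha1 (by omega)
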